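/- arXiv:2104.10304 — 2 statements merged into one kernel-verified Lean document; each statement's English description precedes it below -/
import Mathlib

section
/- Let φ: U → ℝ³ be a smooth conformal harmonic map to the unit sphere with φ_z never vanishing on U, and let u: U → ℝ be smooth with u_{z z̄} = -|φ_z|² u. Define X = u φ + |φ_z|^{-2}(u_z φ_{z̄} + u_{z̄} φ_z). Then X_z = F φ_{z̄}, where F = ∂_z( u_z / |φ_z|² ). -/
open Complex Filter

/-- Wirtinger derivative `∂_z f = (1/2)(∂_x f - i ∂_y f)`. -/
noncomputable def wz {E : Type*} [NormedAddCommGroup E] [NormedSpace ℂ E]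
    (f : ℂ → E) (z : ℂ) : E :=
  (2⁻¹ : ℂ) • (fderiv ℝ f z 1 - Complex.I • fderiv ℝ f z Complex.I)

/-- Wirtinger derivative `∂_z̄ f = (1/2)(∂_x f + i ∂_y f)`. -/
noncomputable def wzb {E : Type*} [NormedAddCommGroup E] [NormedSpace ℂ E]
    (f : ℂ → E) (z : ℂ) : E :=
  (2⁻¹ : ℂ) • (fderiv ℝ f z 1 + Complex.I • fderiv ℝ f z Complex.I)

/-- The ℂ-bilinear product `(v,w) = Σ vᵢ wᵢ` on ℂ³. -/
noncomputable def bil (v w : Fin 3 → ℂ) : ℂ := ∑ i, v i * w i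

/-- The Hermitian product `⟨v,w⟩ = Σ vᵢ w̄ᵢ` on ℂ³. -/
noncomputable def herm (v w : Fin 3 → ℂ) : ℂ := ∑ i, v i * (starRingEnd ℂ) (w i)

/-- `|φ_z|² = ⟨φ_z, φ_z⟩` as a complex number (it is real-valued). -/
noncomputable def nsq (φ : ℂ → Fin 3 → ℂ) (z : ℂ) : ℂ := herm (wz φ z) (wz φ z)

section helpers

open Filter

variable {E : Type*} [NormedAddCommGroup E] [NormedSpace ℂ E] {f g : ℂ → E} {z : ℂ}

lemma wz_congr (h : f =ᶠ[nhds z] g) : wz f z = wz g z := by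
  unfold wz; rw [h.fderiv_eq]

lemma wz_const (c : E) : wz (fun _ => c) z = 0 := by
  simp [wz, fderiv_const]

lemma wz_smul {c : ℂ → ℂ} (hc : DifferentiableAt ℝ c z) (hf : DifferentiableAt ℝ f z) :
    wz (fun w => c w • f w) z = wz c z • f z + c z • wz f z := by
  unfold wz
  rw [fderiv_fun_smul hc hf]
  simp only [ContinuousLinearMap.add_apply, ContinuousLinearMap.smul_apply,
    ContinuousLinearMap.smulRight_apply, smul_eq_mul]
  module

lemma wz_mul {c d : ℂ → ℂ} (hc : DifferentiableAt ℝ c z) (hd : DifferentiableAt ℝ d z) :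
    wz (fun w => c w * d w) z = wz c z * d z + c z * wz d z := by
  have := wz_smul (f := d) hc hd
  simpa [smul_eq_mul, mul_comm] using this

lemma wz_inv {c : ℂ → ℂ} (hc : DifferentiableAt ℝ c z) (h0 : c z ≠ 0) :
    wz (fun w => (c w)⁻¹) z = -(wz c z) / (c z) ^ 2 := by
  have hcomp : (fun w => (c w)⁻¹) = Inv.inv ∘ c := rfl
  have hD : fderiv ℝ (fun w => (c w)⁻¹) z =
      (fderiv ℝ (Inv.inv : ℂ → ℂ) (c z)).comp (fderiv ℝ c z) := by
    rw [hcomp]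
    exact fderiv_comp z (differentiableAt_inv h0) hc
  unfold wz
  rw [hD, fderiv_inv' h0]
  simp only [ContinuousLinearMap.comp_apply, ContinuousLinearMap.neg_apply,
    ContinuousLinearMap.mulLeftRight_apply, smul_eq_mul]
  field_simp
  ring

lemma wz_sum {ι : Type*} (s : Finset ι) (F : ι → ℂ → E)
    (hF : ∀ i ∈ s, DifferentiableAt ℝ (F i) z) :
    wz (fun w => ∑ i ∈ s, F i w) z = ∑ i ∈ s, wz (F i) z := by
  unfold wz
  rw [fderiv_fun_sum hF]
  simp only [ContinuousLinearMap.sum_apply]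
  rw [Finset.smul_sum, ← Finset.sum_sub_distrib, Finset.smul_sum]

end helpers

section comps

open Filter

variable {f : ℂ → Fin 3 → ℂ} {z : ℂ}

lemma fderiv_pi_apply (hf : DifferentiableAt ℝ f z) (i : Fin 3) (v : ℂ) :
    fderiv ℝ (fun w => f w i) z v = fderiv ℝ f z v i := by
  have h : (fun w => f w i) = (ContinuousLinearMap.proj (R := ℝ)
      (φ := fun _ : Fin 3 => ℂ) i) ∘ f := rfl
  rw [h, fderiv_comp z (ContinuousLinearMap.differentiableAt _) hf]
  simp [ContinuousLinearMap.fderiv]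

lemma wz_apply (hf : DifferentiableAt ℝ f z) (i : Fin 3) :
    wz f z i = wz (fun w => f w i) z := by
  simp [wz, fderiv_pi_apply hf]

lemma wzb_apply (hf : DifferentiableAt ℝ f z) (i : Fin 3) :
    wzb f z i = wzb (fun w => f w i) z := by
  simp [wzb, fderiv_pi_apply hf]

lemma diffAt_apply (hf : DifferentiableAt ℝ f z) (i : Fin 3) :
    DifferentiableAt ℝ (fun w => f w i) z := by
  have h : (fun w => f w i) = (ContinuousLinearMap.proj (R := ℝ)
      (φ := fun _ : Fin 3 => ℂ) i) ∘ f := rfl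
  rw [h]
  exact (ContinuousLinearMap.differentiableAt _).comp z hf

lemma diffAt_bil {g : ℂ → Fin 3 → ℂ} (hf : DifferentiableAt ℝ f z)
    (hg : DifferentiableAt ℝ g z) :
    DifferentiableAt ℝ (fun w => bil (f w) (g w)) z := by
  have h1 : (fun w => bil (f w) (g w)) = fun w => ∑ i : Fin 3, f w i * g w i := rfl
  rw [h1]
  exact DifferentiableAt.fun_sum fun i _ => (diffAt_apply hf i).fun_mul (diffAt_apply hg i)

lemma wz_bil {g : ℂ → Fin 3 → ℂ} (hf : DifferentiableAt ℝ f z)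
    (hg : DifferentiableAt ℝ g z) :
    wz (fun w => bil (f w) (g w)) z = bil (wz f z) (g z) + bil (f z) (wz g z) := by
  have h1 : (fun w => bil (f w) (g w)) = fun w => ∑ i, (f w i * g w i) := rfl
  rw [h1, wz_sum _ _ (fun i _ => (diffAt_apply hf i).fun_mul (diffAt_apply hg i))]
  unfold bil
  rw [← Finset.sum_add_distrib]
  refine Finset.sum_congr rfl fun i _ => ?_
  rw [wz_mul (diffAt_apply hf i) (diffAt_apply hg i), wz_apply hf i, wz_apply hg i]

end comps

section conj

open Filter

variable {c : ℂ → ℂ} {z : ℂ}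

lemma fderiv_conj_eq (hc : ∀ᶠ w in nhds z, (c w).im = 0) (v : ℂ) :
    (starRingEnd ℂ) (fderiv ℝ c z v) = fderiv ℝ c z v := by
  have hev : (⇑Complex.conjCLE ∘ c) =ᶠ[nhds z] c := by
    filter_upwards [hc] with w hw
    simp [Complex.conjCLE, Complex.conj_eq_iff_im.2 hw]
  have h1 : fderiv ℝ (⇑Complex.conjCLE ∘ c) z = fderiv ℝ c z := hev.fderiv_eq
  have h2 := Complex.conjCLE.comp_fderiv (f := c) (x := z)
  rw [h1] at h2
  have := congrArg (fun L => L v) h2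
  simpa using this.symm

lemma wzb_eq_conj_wz (hc : ∀ᶠ w in nhds z, (c w).im = 0) :
    wzb c z = (starRingEnd ℂ) (wz c z) := by
  unfold wz wzb
  simp only [smul_eq_mul, map_mul, map_sub, map_add, Complex.conj_I, map_inv₀,
    Complex.conj_ofNat, fderiv_conj_eq hc]
  ring

end conj

section smooth

open Filter ContDiff

variable {E : Type*} [NormedAddCommGroup E] [NormedSpace ℂ E] {f : ℂ → E} {U : Set ℂ} {z : ℂ}

lemma contDiffOn_wz (hU : IsOpen U) (hf : ContDiffOn ℝ (⊤ : ℕ∞) f U) :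
    ContDiffOn ℝ (⊤ : ℕ∞) (wz f) U := by
  have hfd : ContDiffOn ℝ (⊤ : ℕ∞) (fderiv ℝ f) U :=
    hf.fderiv_of_isOpen hU (by simp)
  have h1 : ContDiffOn ℝ (⊤ : ℕ∞) (fun w => fderiv ℝ f w 1) U :=
    hfd.clm_apply contDiffOn_const
  have h2 : ContDiffOn ℝ (⊤ : ℕ∞) (fun w => fderiv ℝ f w Complex.I) U :=
    hfd.clm_apply contDiffOn_const
  unfold wz
  exact ((h1.sub (h2.const_smul Complex.I)).const_smul ((2:ℂ)⁻¹))

lemma contDiffOn_wzb (hU : IsOpen U) (hf : ContDiffOn ℝ (⊤ : ℕ∞) f U) :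
    ContDiffOn ℝ (⊤ : ℕ∞) (wzb f) U := by
  have hfd : ContDiffOn ℝ (⊤ : ℕ∞) (fderiv ℝ f) U :=
    hf.fderiv_of_isOpen hU (by simp)
  have h1 : ContDiffOn ℝ (⊤ : ℕ∞) (fun w => fderiv ℝ f w 1) U :=
    hfd.clm_apply contDiffOn_const
  have h2 : ContDiffOn ℝ (⊤ : ℕ∞) (fun w => fderiv ℝ f w Complex.I) U :=
    hfd.clm_apply contDiffOn_const
  unfold wzb
  exact ((h1.add (h2.const_smul Complex.I)).const_smul ((2:ℂ)⁻¹))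

lemma diffAt_of_contDiffOn (hU : IsOpen U) (hz : z ∈ U)
    (hf : ContDiffOn ℝ (⊤ : ℕ∞) f U) : DifferentiableAt ℝ f z :=
  (hf.contDiffAt (hU.mem_nhds hz)).differentiableAt (by simp)

end smooth

section bilalg

lemma bil_comm (v w : Fin 3 → ℂ) : bil v w = bil w v := by
  unfold bil; exact Finset.sum_congr rfl fun i _ => mul_comm _ _

lemma bil_add_left (v w x : Fin 3 → ℂ) : bil (v + w) x = bil v x + bil w x := by
  unfold bil; rw [← Finset.sum_add_distrib]
  exact Finset.sum_congr rfl fun i _ => by simp [add_mul]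

lemma bil_smul_left (c : ℂ) (v x : Fin 3 → ℂ) : bil (c • v) x = c * bil v x := by
  unfold bil; rw [Finset.mul_sum]
  exact Finset.sum_congr rfl fun i _ => by simp [mul_assoc]

lemma bil_sub_left (v w x : Fin 3 → ℂ) : bil (v - w) x = bil v x - bil w x := by
  unfold bil; rw [← Finset.sum_sub_distrib]
  exact Finset.sum_congr rfl fun i _ => by simp [sub_mul]

lemma bil_smul_right (c : ℂ) (v x : Fin 3 → ℂ) : bil v (c • x) = c * bil v x := by
  rw [bil_comm, bil_smul_left, bil_comm]

lemma bil_conj (v w : Fin 3 → ℂ) :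
    bil (fun i => (starRingEnd ℂ) (v i)) (fun i => (starRingEnd ℂ) (w i)) =
      (starRingEnd ℂ) (bil v w) := by
  unfold bil; rw [map_sum]
  exact Finset.sum_congr rfl fun i _ => (map_mul _ _ _).symm

lemma herm_ne_zero {v : Fin 3 → ℂ} (hv : v ≠ 0) : herm v v ≠ 0 := by
  have h : herm v v = ((∑ i, Complex.normSq (v i) : ℝ) : ℂ) := by
    unfold herm
    rw [Complex.ofReal_sum]
    exact Finset.sum_congr rfl fun i _ => (Complex.mul_conj _)
  rw [h]
  rw [Ne, Complex.ofReal_eq_zero]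
  intro h0
  apply hv
  funext i
  have hi := (Finset.sum_eq_zero_iff_of_nonneg
    (fun j _ => Complex.normSq_nonneg (v j))).1 h0 i (Finset.mem_univ i)
  exact Complex.normSq_eq_zero.1 hi

/-- If `a` is real with `(a,a)=1`, `p` is isotropic `(p,p)=0`, `(a,p)=0` and `⟨p,p⟩ ≠ 0`,
then a vector `bil`-orthogonal to `a`, `p`, `p̄` vanishes. -/
lemma basis_lemma (a p v : Fin 3 → ℂ) (ha_real : ∀ i, (starRingEnd ℂ) (a i) = a i)
    (haa : bil a a = 1) (hap : bil a p = 0) (hpp : bil p p = 0)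
    (hn : herm p p ≠ 0)
    (hva : bil v a = 0) (hvp : bil v p = 0)
    (hvq : bil v (fun i => (starRingEnd ℂ) (p i)) = 0) :
    v = 0 := by
  set q : Fin 3 → ℂ := fun i => (starRingEnd ℂ) (p i) with hq
  have haq : bil a q = 0 := by
    have h1 : bil a q = (starRingEnd ℂ) (bil a p) := by
      unfold bil
      rw [map_sum]
      refine Finset.sum_congr rfl fun i _ => ?_
      rw [map_mul, ha_real i]
    rw [h1, hap, map_zero]
  have hqq : bil q q = 0 := by rw [hq, bil_conj, hpp, map_zero]
  set n : ℂ := herm p p with hnn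
  have hpq : bil p q = n := rfl
  set M : Matrix (Fin 3) (Fin 3) ℂ := Matrix.of ![a, p, q] with hM
  have hrow0 : M 0 = a := rfl
  have hrow1 : M 1 = p := rfl
  have hrow2 : M 2 = q := rfl
  have hent : ∀ i j, (M * M.transpose) i j = bil (M i) (M j) := by
    intro i j
    rw [Matrix.mul_apply]
    unfold bil
    exact Finset.sum_congr rfl fun k _ => by rw [Matrix.transpose_apply]
  have hdet' : M.det ≠ 0 := by
    have hd : M.det * M.det = -(n * n) := by
      have h1 : (M * M.transpose).det = M.det * M.det := by
        rw [Matrix.det_mul, Matrix.det_transpose]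
      rw [← h1, Matrix.det_fin_three]
      simp only [hent, hrow0, hrow1, hrow2, bil_comm p a, bil_comm q a, bil_comm q p,
        haa, hap, haq, hpp, hpq, hqq]
      ring
    intro h
    rw [h, mul_zero] at hd
    exact mul_ne_zero hn hn (by linear_combination hd)
  have hMv : M.mulVec v = 0 := by
    have hent2 : ∀ i, M.mulVec v i = bil (M i) v := fun i => rfl
    funext i
    rw [hent2, Pi.zero_apply]
    match i with
    | 0 => rw [hrow0, bil_comm]; exact hva
    | 1 => rw [hrow1, bil_comm]; exact hvp
    | 2 => rw [hrow2, bil_comm]; exact hvq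
  exact Matrix.eq_zero_of_mulVec_eq_zero hdet' hMv

end bilalg

theorem stmt2 (U : Set ℂ) (hU : IsOpen U) (φ : ℂ → Fin 3 → ℂ)
    (hsmooth : ContDiffOn ℝ (⊤ : ℕ∞) φ U)
    (hreal : ∀ z ∈ U, ∀ i, (φ z i).im = 0)
    (hnorm : ∀ z ∈ U, bil (φ z) (φ z) = 1)
    (hconf : ∀ z ∈ U, bil (wz φ z) (wz φ z) = 0)
    (hharm : ∀ z ∈ U, wz (wzb φ) z = -(nsq φ z) • φ z)
    (hpos : ∀ z ∈ U, wz φ z ≠ 0)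
    (u : ℂ → ℂ)
    (husmooth : ContDiffOn ℝ (⊤ : ℕ∞) u U)
    (hureal : ∀ z ∈ U, (u z).im = 0)
    (hueig : ∀ z ∈ U, wz (wzb u) z = -(nsq φ z) * u z)
    (X : ℂ → Fin 3 → ℂ)
    (hX : ∀ z ∈ U, X z =
      u z • φ z + (nsq φ z)⁻¹ • (wz u z • wzb φ z + wzb u z • wz φ z)) :
    ∀ z ∈ U, wz X z = wz (fun w => wz u w / nsq φ w) z • wzb φ z := by
  -- differentiability of the basic players at points of U
  have hdφ : ∀ w ∈ U, DifferentiableAt ℝ φ w :=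
    fun w hw => diffAt_of_contDiffOn hU hw hsmooth
  have hdu : ∀ w ∈ U, DifferentiableAt ℝ u w :=
    fun w hw => diffAt_of_contDiffOn hU hw husmooth
  have hdP : ∀ w ∈ U, DifferentiableAt ℝ (wz φ) w :=
    fun w hw => diffAt_of_contDiffOn hU hw (contDiffOn_wz hU hsmooth)
  have hdQ : ∀ w ∈ U, DifferentiableAt ℝ (wzb φ) w :=
    fun w hw => diffAt_of_contDiffOn hU hw (contDiffOn_wzb hU hsmooth)
  have hdwu : ∀ w ∈ U, DifferentiableAt ℝ (wz u) w :=
    fun w hw => diffAt_of_contDiffOn hU hw (contDiffOn_wz hU husmooth)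
  have hdwub : ∀ w ∈ U, DifferentiableAt ℝ (wzb u) w :=
    fun w hw => diffAt_of_contDiffOn hU hw (contDiffOn_wzb hU husmooth)
  -- conjugation relation
  have hQconj : ∀ w ∈ U, wzb φ w = fun i => (starRingEnd ℂ) (wz φ w i) := by
    intro w hw
    funext i
    rw [wzb_apply (hdφ w hw) i, wz_apply (hdφ w hw) i]
    exact wzb_eq_conj_wz (eventually_of_mem (hU.mem_nhds hw) fun x hx => hreal x hx i)
  -- nsq as a bilinear expression
  set N : ℂ → ℂ := fun w => bil (wz φ w) (wzb φ w) with hN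
  have hn_eq : ∀ w ∈ U, nsq φ w = N w := by
    intro w hw
    rw [hN]
    simp only
    rw [hQconj w hw]
    rfl
  have hn0 : ∀ w ∈ U, nsq φ w ≠ 0 := fun w hw => herm_ne_zero (hpos w hw)
  have hdN : ∀ w ∈ U, DifferentiableAt ℝ N w :=
    fun w hw => diffAt_bil (hdP w hw) (hdQ w hw)
  -- first-order orthogonality relations, valid on U
  have hap : ∀ w ∈ U, bil (φ w) (wz φ w) = 0 := by
    intro w hw
    have h1 : wz (fun x => bil (φ x) (φ x)) w = 0 := by
      rw [wz_congr (eventuallyEq_of_mem (hU.mem_nhds hw) fun x hx => hnorm x hx), wz_const]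
    rw [wz_bil (hdφ w hw) (hdφ w hw), bil_comm (wz φ w) (φ w)] at h1
    linear_combination h1 / 2
  have haq : ∀ w ∈ U, bil (φ w) (wzb φ w) = 0 := by
    intro w hw
    rw [hQconj w hw]
    have h1 : bil (φ w) (fun i => (starRingEnd ℂ) (wz φ w i)) =
        (starRingEnd ℂ) (bil (φ w) (wz φ w)) := by
      unfold bil
      rw [map_sum]
      refine Finset.sum_congr rfl fun i _ => ?_
      rw [map_mul, Complex.conj_eq_iff_im.2 (hreal w hw i)]
    rw [h1, hap w hw, map_zero]
  have hqq : ∀ w ∈ U, bil (wzb φ w) (wzb φ w) = 0 := by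
    intro w hw
    rw [hQconj w hw, bil_conj, hconf w hw, map_zero]
  have hpq : ∀ w ∈ U, bil (wz φ w) (wzb φ w) = nsq φ w :=
    fun w hw => (hn_eq w hw).symm
  -- differentiability of X
  set Y : ℂ → Fin 3 → ℂ :=
    fun w => u w • φ w + (N w)⁻¹ • (wz u w • wzb φ w + wzb u w • wz φ w) with hY
  have hXY : ∀ w ∈ U, X w = Y w := by
    intro w hw
    rw [hX w hw, hY, hn_eq w hw]
  have hdX : ∀ w ∈ U, DifferentiableAt ℝ X w := by
    intro w hw
    have hNw0 : N w ≠ 0 := by rw [← hn_eq w hw]; exact hn0 w hw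
    have hdY : DifferentiableAt ℝ Y w :=
      ((hdu w hw).smul (hdφ w hw)).add
        (((hdN w hw).inv hNw0).smul
          (((hdwu w hw).smul (hdQ w hw)).add ((hdwub w hw).smul (hdP w hw))))
    exact (eventuallyEq_of_mem (hU.mem_nhds hw) fun x hx => hXY x hx).differentiableAt_iff.2 hdY
  -- pairings of X with the moving frame, valid on U
  have hs1 : ∀ w ∈ U, bil (X w) (φ w) = u w := by
    intro w hw
    rw [hX w hw]
    simp only [bil_add_left, bil_smul_left]
    rw [hnorm w hw, bil_comm (wzb φ w) (φ w), haq w hw, bil_comm (wz φ w) (φ w), hap w hw]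
    ring
  have hs2 : ∀ w ∈ U, bil (X w) (wz φ w) = wz u w := by
    intro w hw
    rw [hX w hw]
    simp only [bil_add_left, bil_smul_left]
    rw [hap w hw, bil_comm (wzb φ w) (wz φ w), hpq w hw, hconf w hw]
    field_simp [hn0 w hw]
    ring
  have hs3 : ∀ w ∈ U, bil (X w) (wzb φ w) = wzb u w := by
    intro w hw
    rw [hX w hw]
    simp only [bil_add_left, bil_smul_left]
    rw [haq w hw, hqq w hw, hpq w hw]
    field_simp [hn0 w hw]
    ring
  -- now fix z
  intro z hz
  have hzU : U ∈ nhds z := hU.mem_nhds hz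
  -- second-order relations at z
  have hpza : bil (wz (wz φ) z) (φ z) = 0 := by
    have h1 : wz (fun x => bil (wz φ x) (φ x)) z = 0 := by
      have hev : (fun x => bil (wz φ x) (φ x)) =ᶠ[nhds z] (fun _ => (0 : ℂ)) :=
        eventuallyEq_of_mem hzU fun x hx => by
          show bil (wz φ x) (φ x) = 0
          rw [bil_comm]
          exact hap x hx
      rw [wz_congr hev, wz_const]
    rw [wz_bil (hdP z hz) (hdφ z hz)] at h1
    rw [hconf z hz] at h1
    linear_combination h1
  have hpzp : bil (wz (wz φ) z) (wz φ z) = 0 := by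
    have h1 : wz (fun x => bil (wz φ x) (wz φ x)) z = 0 := by
      rw [wz_congr (eventuallyEq_of_mem hzU fun x hx => hconf x hx), wz_const]
    rw [wz_bil (hdP z hz) (hdP z hz), bil_comm (wz φ z) (wz (wz φ) z)] at h1
    linear_combination h1 / 2
  have hnz : wz (nsq φ) z = bil (wz (wz φ) z) (wzb φ z) := by
    have h1 : wz (nsq φ) z = wz N z :=
      wz_congr (eventuallyEq_of_mem hzU fun x hx => hn_eq x hx)
    rw [h1, hN]
    rw [wz_bil (hdP z hz) (hdQ z hz), hharm z hz, bil_smul_right,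
      bil_comm (wz φ z) (φ z), hap z hz]
    ring
  -- the three pairings of wz X at z
  have e1 : bil (wz X z) (φ z) = 0 := by
    have h1 : wz (fun w => bil (X w) (φ w)) z = wz u z :=
      wz_congr (eventuallyEq_of_mem hzU fun x hx => hs1 x hx)
    rw [wz_bil (hdX z hz) (hdφ z hz)] at h1
    rw [hs2 z hz] at h1
    linear_combination h1
  have e2 : bil (wz X z) (wz φ z) =
      wz (wz u) z - (nsq φ z)⁻¹ * (wz u z * wz (nsq φ) z) := by
    have h1 : wz (fun w => bil (X w) (wz φ w)) z = wz (wz u) z :=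
      wz_congr (eventuallyEq_of_mem hzU fun x hx => hs2 x hx)
    rw [wz_bil (hdX z hz) (hdP z hz)] at h1
    have h2 : bil (X z) (wz (wz φ) z) = (nsq φ z)⁻¹ * (wz u z * wz (nsq φ) z) := by
      rw [hX z hz]
      simp only [bil_add_left, bil_smul_left]
      rw [bil_comm (φ z) (wz (wz φ) z), hpza,
        bil_comm (wzb φ z) (wz (wz φ) z), ← hnz,
        bil_comm (wz φ z) (wz (wz φ) z), hpzp]
      ring
    rw [h2] at h1
    linear_combination h1
  have e3 : bil (wz X z) (wzb φ z) = 0 := by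
    have h1 : wz (fun w => bil (X w) (wzb φ w)) z = wz (wzb u) z :=
      wz_congr (eventuallyEq_of_mem hzU fun x hx => hs3 x hx)
    rw [wz_bil (hdX z hz) (hdQ z hz)] at h1
    rw [hharm z hz, bil_smul_right, hs1 z hz, hueig z hz] at h1
    linear_combination h1
  -- the factor F
  have hNz0 : N z ≠ 0 := by rw [← hn_eq z hz]; exact hn0 z hz
  have hF : wz (fun w => wz u w / nsq φ w) z =
      wz (wz u) z * (nsq φ z)⁻¹ + wz u z * (-(wz (nsq φ) z) / (nsq φ z) ^ 2) := by
    have h1 : wz (fun w => wz u w / nsq φ w) z = wz (fun w => wz u w * (N w)⁻¹) z := by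
      refine wz_congr (eventuallyEq_of_mem hzU fun x hx => ?_)
      rw [div_eq_mul_inv, hn_eq x hx]
    rw [h1, wz_mul (hdwu z hz) ((hdN z hz).fun_inv hNz0),
      wz_inv (hdN z hz) hNz0]
    have h2 : wz N z = wz (nsq φ) z :=
      (wz_congr (eventuallyEq_of_mem hzU fun x hx => hn_eq x hx)).symm
    rw [h2, ← hn_eq z hz]
  -- conclude via the basis lemma
  have hG : wz X z - wz (fun w => wz u w / nsq φ w) z • wzb φ z = 0 := by
    apply basis_lemma (φ z) (wz φ z) _
      (fun i => Complex.conj_eq_iff_im.2 (hreal z hz i))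
      (hnorm z hz) (hap z hz) (hconf z hz) (herm_ne_zero (hpos z hz))
    · rw [bil_sub_left, bil_smul_left, e1, bil_comm (wzb φ z) (φ z), haq z hz]
      ring
    · rw [bil_sub_left, bil_smul_left, e2, bil_comm (wzb φ z) (wz φ z), hpq z hz, hF]
      field_simp [hn0 z hz]
      ring
    · rw [← hQconj z hz, bil_sub_left, bil_smul_left, e3, hqq z hz]
      ring
  have := sub_eq_zero.1 hG
  exact this
end

section
/- Let A ∈ GL(n, ℂ) and let L ⊆ ℂⁿ be an m-dimensional subspace. For X ∈ Hom_ℂ(L, L^⊥) define A_*X = π^⊥_{AL} ∘ A ∘ X ∘ (A|_L)^{-1} ∈ Hom_ℂ(AL, (AL)^⊥), where π^⊥_{AL} is the Hermitian-orthogonal projection onto (AL)^⊥. Then there is a constant c = c(A, n) > 0, which may be taken as c = n‖A‖·‖A^{-1}‖ (operator norms), such that for all such X: (1/c)‖X‖_{HS} ≤ ‖A_*X‖_{HS} ≤ c‖X‖_{HS}, where ‖·‖_{HS} is the Hilbert–Schmidt norm. -/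
open Complex

noncomputable def hsNorm {n : ℕ}
    (T : EuclideanSpace ℂ (Fin n) →L[ℂ] EuclideanSpace ℂ (Fin n)) : ℝ :=
  Real.sqrt (∑ i, ‖T (EuclideanSpace.single i 1)‖ ^ 2)

noncomputable def projCLM {n : ℕ} (K : Submodule ℂ (EuclideanSpace ℂ (Fin n))) :
    EuclideanSpace ℂ (Fin n) →L[ℂ] EuclideanSpace ℂ (Fin n) :=
  K.subtypeL.comp K.orthogonalProjectionOnto

lemma hsNorm_nonneg {n : ℕ} (T : EuclideanSpace ℂ (Fin n) →L[ℂ] EuclideanSpace ℂ (Fin n)) :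
    0 ≤ hsNorm T := Real.sqrt_nonneg _

lemma opNorm_le_hsNorm {n : ℕ} (T : EuclideanSpace ℂ (Fin n) →L[ℂ] EuclideanSpace ℂ (Fin n)) :
    ‖T‖ ≤ hsNorm T := by
  apply T.opNorm_le_bound (hsNorm_nonneg T)
  intro v
  have hv : v = ∑ i, v i • EuclideanSpace.single i (1 : ℂ) := by
    ext j
    rw [WithLp.ofLp_sum, Finset.sum_apply]
    simp [EuclideanSpace.single_apply]
  calc ‖T v‖ = ‖∑ i, v i • T (EuclideanSpace.single i (1:ℂ))‖ := by
        conv_lhs => rw [hv]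
        rw [map_sum]
        simp
    _ ≤ ∑ i, ‖v i‖ * ‖T (EuclideanSpace.single i (1:ℂ))‖ := by
        refine (norm_sum_le _ _).trans_eq ?_
        simp [norm_smul]
    _ ≤ hsNorm T * ‖v‖ := by
        rw [mul_comm, hsNorm, EuclideanSpace.norm_eq]
        have h := Finset.sum_mul_sq_le_sq_mul_sq Finset.univ
          (fun i => ‖v i‖) (fun i => ‖T (EuclideanSpace.single i (1:ℂ))‖)
        calc ∑ i, ‖v i‖ * ‖T (EuclideanSpace.single i (1:ℂ))‖
            ≤ Real.sqrt ((∑ i, ‖v i‖ ^ 2) * ∑ i, ‖T (EuclideanSpace.single i (1:ℂ))‖ ^ 2) :=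
              Real.le_sqrt_of_sq_le h
          _ = _ := by rw [Real.sqrt_mul (by positivity)]

lemma hsNorm_le {n : ℕ} (T : EuclideanSpace ℂ (Fin n) →L[ℂ] EuclideanSpace ℂ (Fin n)) :
    hsNorm T ≤ Real.sqrt n * ‖T‖ := by
  rw [hsNorm, ← Real.sqrt_sq (norm_nonneg T), ← Real.sqrt_mul (by positivity)]
  apply Real.sqrt_le_sqrt
  calc ∑ i, ‖T (EuclideanSpace.single i (1:ℂ))‖ ^ 2
      ≤ ∑ _i : Fin n, ‖T‖ ^ 2 := by
        apply Finset.sum_le_sum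
        intro i _
        have h1 : ‖T (EuclideanSpace.single i (1:ℂ))‖ ≤ ‖T‖ := by
          have h2 := T.le_opNorm (EuclideanSpace.single i (1:ℂ))
          rwa [EuclideanSpace.norm_single, norm_one, mul_one] at h2
        exact pow_le_pow_left₀ (norm_nonneg _) h1 2
    _ = n * ‖T‖ ^ 2 := by
        rw [Finset.sum_const, Finset.card_univ, Fintype.card_fin, nsmul_eq_mul]

lemma projCLM_norm_le {n : ℕ} (K : Submodule ℂ (EuclideanSpace ℂ (Fin n))) :
    ‖projCLM K‖ ≤ 1 := by
  apply ContinuousLinearMap.opNorm_le_bound _ zero_le_one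
  intro v
  rw [one_mul]
  calc ‖projCLM K v‖ = ‖Submodule.orthogonalProjectionOnto K v‖ := rfl
    _ ≤ ‖Submodule.orthogonalProjectionOnto K‖ * ‖v‖ := (Submodule.orthogonalProjectionOnto K).le_opNorm v
    _ ≤ 1 * ‖v‖ := by gcongr; exact Submodule.orthogonalProjectionOnto_norm_le K
    _ = ‖v‖ := one_mul _


lemma norm_comp5_le {n : ℕ} (P B C D Q : EuclideanSpace ℂ (Fin n) →L[ℂ] EuclideanSpace ℂ (Fin n))
    (hP : ‖P‖ ≤ 1) (hQ : ‖Q‖ ≤ 1) :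
    ‖P.comp (B.comp (C.comp (D.comp Q)))‖ ≤ ‖B‖ * ‖C‖ * ‖D‖ := by
  calc ‖P.comp (B.comp (C.comp (D.comp Q)))‖
      ≤ ‖P‖ * ‖B.comp (C.comp (D.comp Q))‖ := ContinuousLinearMap.opNorm_comp_le _ _
    _ ≤ 1 * ‖B.comp (C.comp (D.comp Q))‖ :=
        mul_le_mul_of_nonneg_right hP (norm_nonneg _)
    _ = ‖B.comp (C.comp (D.comp Q))‖ := one_mul _
    _ ≤ ‖B‖ * ‖C.comp (D.comp Q)‖ := ContinuousLinearMap.opNorm_comp_le _ _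
    _ ≤ ‖B‖ * (‖C‖ * ‖D.comp Q‖) :=
        mul_le_mul_of_nonneg_left (ContinuousLinearMap.opNorm_comp_le _ _) (norm_nonneg B)
    _ ≤ ‖B‖ * (‖C‖ * (‖D‖ * ‖Q‖)) := by
        apply mul_le_mul_of_nonneg_left _ (norm_nonneg B)
        exact mul_le_mul_of_nonneg_left (ContinuousLinearMap.opNorm_comp_le _ _) (norm_nonneg C)
    _ ≤ ‖B‖ * (‖C‖ * (‖D‖ * 1)) := by
        apply mul_le_mul_of_nonneg_left _ (norm_nonneg B)
        apply mul_le_mul_of_nonneg_left _ (norm_nonneg C)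
        exact mul_le_mul_of_nonneg_left hQ (norm_nonneg D)
    _ = ‖B‖ * ‖C‖ * ‖D‖ := by ring

theorem stmt17 (n m : ℕ) (hn : 0 < n)
    (A : EuclideanSpace ℂ (Fin n) ≃L[ℂ] EuclideanSpace ℂ (Fin n))
    (L : Submodule ℂ (EuclideanSpace ℂ (Fin n)))
    (hm : Module.finrank ℂ L = m)
    -- `X` is an element of `Hom_ℂ(L, L^⊥)`, extended by zero on `L^⊥`:
    (X : EuclideanSpace ℂ (Fin n) →L[ℂ] EuclideanSpace ℂ (Fin n))
    (hX0 : ∀ v ∈ Lᗮ, X v = 0) (hXr : ∀ v, X v ∈ Lᗮ) :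
    -- `A_* X = π^⊥_{AL} ∘ A ∘ X ∘ (A|_L)⁻¹`, extended by zero on `(AL)^⊥`:
    let AL := L.map ((A : EuclideanSpace ℂ (Fin n) →L[ℂ] EuclideanSpace ℂ (Fin n)) :
      EuclideanSpace ℂ (Fin n) →ₗ[ℂ] EuclideanSpace ℂ (Fin n))
    let Astar := (projCLM ALᗮ).comp
      (((A : EuclideanSpace ℂ (Fin n) →L[ℂ] EuclideanSpace ℂ (Fin n)).comp
        (X.comp ((A.symm : EuclideanSpace ℂ (Fin n) →L[ℂ] EuclideanSpace ℂ (Fin n)).comp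
          (projCLM AL)))))
    let c := (n : ℝ) * ‖(A : EuclideanSpace ℂ (Fin n) →L[ℂ] EuclideanSpace ℂ (Fin n))‖ *
      ‖(A.symm : EuclideanSpace ℂ (Fin n) →L[ℂ] EuclideanSpace ℂ (Fin n))‖
    0 < c ∧ c⁻¹ * hsNorm X ≤ hsNorm Astar ∧ hsNorm Astar ≤ c * hsNorm X := by
  intro AL Astar c
  set E := EuclideanSpace ℂ (Fin n)
  set Acl : E →L[ℂ] E := (A : E →L[ℂ] E) with hAcl
  set Asym : E →L[ℂ] E := (A.symm : E →L[ℂ] E) with hAsym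
  haveI : Nonempty (Fin n) := Fin.pos_iff_nonempty.mp hn
  -- ‖A‖ * ‖A⁻¹‖ ≥ 1
  have hid : (ContinuousLinearMap.id ℂ E) = Acl.comp Asym := by
    ext v; simp [hAcl, hAsym]
  have hone : (1 : ℝ) ≤ ‖Acl‖ * ‖Asym‖ := by
    have h1 : ‖(ContinuousLinearMap.id ℂ E)‖ = 1 := ContinuousLinearMap.norm_id
    calc (1:ℝ) = ‖(ContinuousLinearMap.id ℂ E)‖ := h1.symm
      _ = ‖Acl.comp Asym‖ := by rw [hid]
      _ ≤ ‖Acl‖ * ‖Asym‖ := ContinuousLinearMap.opNorm_comp_le _ _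
  have hc : c = (n : ℝ) * (‖Acl‖ * ‖Asym‖) := by
    simp only [c, mul_assoc, hAcl, hAsym]
  have hcpos : 0 < c := by
    rw [hc]
    have : (0:ℝ) < n := Nat.cast_pos.mpr hn
    nlinarith
  have hsqrtn : Real.sqrt n ≤ n := by
    have h1 : (1:ℝ) ≤ n := by exact_mod_cast hn
    have h2 : Real.sqrt (n:ℝ) ≤ Real.sqrt ((n:ℝ)^2) := Real.sqrt_le_sqrt (by nlinarith)
    rwa [Real.sqrt_sq (by positivity)] at h2
  -- key identity: X is recovered from Astar
  have hkey : X = (projCLM Lᗮ).comp (Asym.comp (Astar.comp (Acl.comp (projCLM L)))) := by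
    refine ContinuousLinearMap.ext fun v => ?_
    set p : E := (Submodule.orthogonalProjectionOnto L v : E) with hp
    have hpL : p ∈ L := Subtype.coe_prop _
    have hXv : X v = X p := by
      have hsub : v - p ∈ Lᗮ := Submodule.sub_starProjection_mem_orthogonal v
      have : X (v - p) = 0 := hX0 _ hsub
      have h2 : X v - X p = 0 := by rw [← map_sub]; exact this
      linear_combination (norm := module) h2
    have hAp : Acl p ∈ AL := Submodule.mem_map_of_mem hpL
    have hprojAL : (Submodule.orthogonalProjectionOnto AL (Acl p) : E) = Acl p :=
      Submodule.starProjection_eq_self_iff.mpr hAp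
    set w : E := X p with hw
    have hwL : w ∈ Lᗮ := hXr p
    -- compute Astar (Acl p)
    have hAstar : Astar (Acl p) = Acl w - (Submodule.orthogonalProjectionOnto AL (Acl w) : E) := by
      show (Submodule.orthogonalProjectionOnto ALᗮ (Acl (X (Asym ((Submodule.orthogonalProjectionOnto AL (Acl p) : E))))) : E) = _
      rw [hprojAL]
      have : Asym (Acl p) = p := A.symm_apply_apply p
      rw [this]
      exact Submodule.starProjection_orthogonal_val _
    have husym : Asym ((Submodule.orthogonalProjectionOnto AL (Acl w) : E)) ∈ L := by
      have hmem : (Submodule.orthogonalProjectionOnto AL (Acl w) : E) ∈ AL := Subtype.coe_prop _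
      obtain ⟨x, hx, hx2⟩ := hmem
      have : Asym (Acl x) = x := A.symm_apply_apply x
      rw [← hx2]
      show Asym (Acl x) ∈ L
      rw [this]
      exact hx
    have hgoal : (Submodule.orthogonalProjectionOnto Lᗮ (Asym (Astar (Acl ((Submodule.orthogonalProjectionOnto L v : E))))) : E) = X v := by
      rw [← hp, hAstar, map_sub]
      have h3 : Asym (Acl w) = w := A.symm_apply_apply w
      rw [h3, map_sub]
      have h4 : (Submodule.orthogonalProjectionOnto Lᗮ w : E) = w := Submodule.starProjection_eq_self_iff.mpr hwL
      have h5 : Submodule.orthogonalProjectionOnto Lᗮ (Asym ((Submodule.orthogonalProjectionOnto AL (Acl w) : E))) = 0 :=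
        Submodule.orthogonalProjectionOnto_apply_of_mem_orthogonal
          (Submodule.le_orthogonal_orthogonal L husym)
      rw [Submodule.coe_sub, h4, h5, hXv]
      simp [hw]
    exact hgoal.symm
  -- upper bound
  have hb1 : ‖Astar‖ ≤ ‖Acl‖ * ‖X‖ * ‖Asym‖ :=
    norm_comp5_le _ _ _ _ _ (projCLM_norm_le _) (projCLM_norm_le _)
  have hb2 : ‖X‖ ≤ ‖Asym‖ * ‖Astar‖ * ‖Acl‖ := by
    rw [hkey]
    exact norm_comp5_le _ _ _ _ _ (projCLM_norm_le _) (projCLM_norm_le _)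
  have eX : ‖X‖ ≤ hsNorm X := opNorm_le_hsNorm X
  have eA : ‖Astar‖ ≤ hsNorm Astar := opNorm_le_hsNorm Astar
  have hKnn : (0:ℝ) ≤ (n:ℝ) * ‖Acl‖ * ‖Asym‖ := by positivity
  have hup : hsNorm Astar ≤ c * hsNorm X := by
    have e1 : hsNorm Astar ≤ Real.sqrt n * ‖Astar‖ := hsNorm_le _
    have e2 : Real.sqrt n * ‖Astar‖ ≤ (n:ℝ) * (‖Acl‖ * ‖X‖ * ‖Asym‖) :=
      mul_le_mul hsqrtn hb1 (norm_nonneg _) (Nat.cast_nonneg n)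
    rw [hc]
    nlinarith [hsNorm_nonneg X, norm_nonneg Acl, norm_nonneg Asym, norm_nonneg X,
      mul_nonneg (mul_nonneg (Nat.cast_nonneg (α := ℝ) n) (norm_nonneg Acl)) (norm_nonneg Asym)]
  have hlow : hsNorm X ≤ c * hsNorm Astar := by
    have e1 : hsNorm X ≤ Real.sqrt n * ‖X‖ := hsNorm_le _
    have e2 : Real.sqrt n * ‖X‖ ≤ (n:ℝ) * (‖Asym‖ * ‖Astar‖ * ‖Acl‖) :=
      mul_le_mul hsqrtn hb2 (norm_nonneg _) (Nat.cast_nonneg n)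
    rw [hc]
    nlinarith [hsNorm_nonneg Astar, norm_nonneg Acl, norm_nonneg Asym, norm_nonneg Astar,
      mul_nonneg (mul_nonneg (Nat.cast_nonneg (α := ℝ) n) (norm_nonneg Acl)) (norm_nonneg Asym)]
  refine ⟨hcpos, ?_, hup⟩
  rw [inv_mul_le_iff₀ hcpos]
  exact hlow
end
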